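/- arXiv:1602.02610 — 4 statements merged into one kernel-verified Lean document; each statement's English description precedes it below -/
import Mathlib

section
/- Let G be a connected graph, X a module of G with |X| ≥ 2, and v ∈ V(G) \ X. Then for any two vertices x, y ∈ X, dist_G(v,x) = dist_G(v,y). Consequently, any vertex of G that resolves two distinct vertices of X must itself belong to X. -/
def IsModule {V : Type*} (G : SimpleGraph V) (X : Set V) : Prop :=
  ∀ v ∉ X, (∀ x ∈ X, G.Adj v x) ∨ (∀ x ∈ X, ¬ G.Adj v x)

namespace IsModule

variable {V : Type*} {G : SimpleGraph V} {X : Set V} {x : V}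

/-- Cut a walk into `X` at its first vertex in `X`: the vertex before it lies outside `X`,
so by the module property it is adjacent to `x` as well. -/
theorem exists_walk_length_le (hX : IsModule G X) (hx : x ∈ X) {u y : V} (hu : u ∉ X)
    (hy : y ∈ X) (p : G.Walk u y) : ∃ q : G.Walk u x, q.length ≤ p.length := by
  induction p with
  | nil => exact absurd hy hu
  | @cons u w y huw p ih =>
    by_cases hw : w ∈ X
    · have hux : G.Adj u x := (hX u hu).resolve_right (fun h => h w hw huw) x hx
      exact ⟨.cons hux .nil, by simp⟩
    · obtain ⟨q, hq⟩ := ih hw hy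
      exact ⟨.cons huw q, by simpa using hq⟩

theorem reachable_of_reachable (hX : IsModule G X) (hx : x ∈ X) {u y : V} (hu : u ∉ X)
    (hy : y ∈ X) (h : G.Reachable u y) : G.Reachable u x :=
  let ⟨p⟩ := h
  (hX.exists_walk_length_le hx hu hy p).elim fun q _ => ⟨q⟩

theorem dist_le_of_reachable (hX : IsModule G X) (hx : x ∈ X) {u y : V} (hu : u ∉ X)
    (hy : y ∈ X) (h : G.Reachable u y) : G.dist u x ≤ G.dist u y := by
  obtain ⟨p, hp⟩ := h.exists_walk_length_eq_dist
  obtain ⟨q, hq⟩ := hX.exists_walk_length_le hx hu hy p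
  exact (SimpleGraph.dist_le q).trans (hp ▸ hq)

theorem dist_eq (hX : IsModule G X) {u y : V} (hu : u ∉ X) (hx : x ∈ X) (hy : y ∈ X) :
    G.dist u x = G.dist u y := by
  by_cases h : G.Reachable u x
  · exact le_antisymm (hX.dist_le_of_reachable hx hu hy (hX.reachable_of_reachable hy hu hx h))
      (hX.dist_le_of_reachable hy hu hx h)
  · rw [SimpleGraph.dist_eq_zero_of_not_reachable h,
      SimpleGraph.dist_eq_zero_of_not_reachable (mt (hX.reachable_of_reachable hx hu hy) h)]

end IsModule

theorem stmt0_general {V : Type*} (G : SimpleGraph V)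
    (X : Set V) (hX : IsModule G X)
    (v : V) (hv : v ∉ X) :
    (∀ x ∈ X, ∀ y ∈ X, G.dist v x = G.dist v y) ∧
    (∀ u : V, ∀ x ∈ X, ∀ y ∈ X, x ≠ y → G.dist u x ≠ G.dist u y → u ∈ X) :=
  ⟨fun _ hx _ hy => hX.dist_eq hv hx hy,
    fun _ _ hx _ hy _ hne => by_contra fun hu => hne (hX.dist_eq hu hx hy)⟩

theorem stmt0 {V : Type*} (G : SimpleGraph V) (hG : G.Connected)
    (X : Set V) (hX : IsModule G X) (hcard : X.Nontrivial)
    (v : V) (hv : v ∉ X) :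
    (∀ x ∈ X, ∀ y ∈ X, G.dist v x = G.dist v y) ∧
    (∀ u : V, ∀ x ∈ X, ∀ y ∈ X, x ≠ y → G.dist u x ≠ G.dist u y → u ∈ X) :=
  stmt0_general G X hX v hv
end

section
/- Let G be a connected graph, X a separator of G with diam_G(X) ≤ d, and V₁, V₂ a partition of V(G) \ X with no edges between V₁ and V₂. For v ∈ V₁, define the projection Pr_{v,d}(X) = (X₀,...,X_d) where X_i = {x ∈ X : dist_G(v,x) = dist_G(v,X) + i}. If u, v ∈ V₁ have Pr_{u,d}(X) = Pr_{v,d}(X), then for any two distinct x, y ∈ V₂, u resolves x and y if and only if v resolves x and y. -/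
noncomputable def setDist {V : Type*} (G : SimpleGraph V) (S : Set V) (x : V) : ℕ :=
  sInf {m | ∃ u ∈ S, m = G.dist u x}

/-- The `i`-th class of the projection of `v` on `X`. -/
def projClass {V : Type*} (G : SimpleGraph V) (X : Set V) (v : V) (i : ℕ) : Set V :=
  {x ∈ X | G.dist v x = setDist G X v + i}

/-!
Write `δ w = setDist G X w`. For `t ∈ X` we have `δ u ≤ dist u t ≤ δ u + d` by the diameter
bound, so `t` lies in the projection class of `u` of index `dist u t - δ u ≤ d`; equality of the
projections makes this index the same for `v`. Every geodesic from `V₁` to `x ∈ V₂` passes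
through `X`, so `dist u x - δ u = min_{t ∈ X} (dist u t - δ u + dist t x)` is the same for `u` and
`v`. Hence `dist u` and `dist v` differ on `V₂` by a constant, and resolve the same pairs.
-/

namespace SimpleGraph

variable {V : Type*} {G : SimpleGraph V}

theorem Walk.exists_mem_support_of_adj_subset {S X : Set V}
    (hS : ∀ a ∈ S, ∀ w, G.Adj a w → w ∈ S ∪ X) {a b : V} (p : G.Walk a b) (ha : a ∈ S)
    (hb : b ∉ S) : ∃ t ∈ X, t ∈ p.support := by
  obtain ⟨e, he, hfst, hsnd⟩ := p.exists_boundary_dart S ha hb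
  refine ⟨e.snd, ?_, p.dart_snd_mem_support_of_mem_darts he⟩
  exact (hS _ hfst _ e.adj).resolve_left hsnd

theorem Reachable.exists_dist_add_dist_eq {X : Set V} {b x : V} (hbx : G.Reachable b x)
    (hmeets : ∀ p : G.Walk b x, ∃ t ∈ X, t ∈ p.support) :
    ∃ t ∈ X, G.dist b t + G.dist t x = G.dist b x := by
  classical
  obtain ⟨p, hp⟩ := hbx.exists_walk_length_eq_dist
  obtain ⟨t, ht, hts⟩ := hmeets p
  refine ⟨t, ht, le_antisymm ?_ (Reachable.dist_triangle_right ⟨p.dropUntil t hts⟩ b)⟩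
  calc G.dist b t + G.dist t x
      ≤ (p.takeUntil t hts).length + (p.dropUntil t hts).length :=
        Nat.add_le_add (dist_le _) (dist_le _)
    _ = G.dist b x := by rw [← Walk.length_append, p.take_spec hts, hp]

theorem setDist_le_dist {S : Set V} {t : V} (ht : t ∈ S) (w : V) :
    setDist G S w ≤ G.dist w t :=
  G.dist_comm ▸ Nat.sInf_le ⟨t, ht, rfl⟩

theorem exists_dist_eq_setDist {S : Set V} (hS : S.Nonempty) (w : V) :
    ∃ t ∈ S, G.dist w t = setDist G S w := by
  obtain ⟨t, ht, h⟩ := Nat.sInf_mem (s := {m | ∃ u ∈ S, m = G.dist u w})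
    ⟨_, hS.some, hS.some_mem, rfl⟩
  exact ⟨t, ht, by rw [setDist, h, G.dist_comm]⟩

theorem dist_add_setDist_eq_of_projClass_eq (hG : G.Connected) {X : Set V} {d : ℕ}
    (hdiam : ∀ a ∈ X, ∀ b ∈ X, G.dist a b ≤ d) {u v : V}
    (hproj : ∀ i ≤ d, projClass G X u i = projClass G X v i) {t : V} (ht : t ∈ X) :
    G.dist u t + setDist G X v = G.dist v t + setDist G X u := by
  obtain ⟨t₀, ht₀, hut₀⟩ := exists_dist_eq_setDist ⟨t, ht⟩ u
  have hlower : setDist G X u ≤ G.dist u t := setDist_le_dist ht u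
  have hupper : G.dist u t ≤ setDist G X u + d :=
    calc G.dist u t ≤ G.dist u t₀ + G.dist t₀ t := hG.dist_triangle
      _ ≤ setDist G X u + d := hut₀ ▸ Nat.add_le_add_left (hdiam t₀ ht₀ t ht) _
  have hmem : t ∈ projClass G X u (G.dist u t - setDist G X u) := ⟨ht, by omega⟩
  rw [hproj _ (by omega)] at hmem
  have := hmem.2
  omega

theorem dist_add_le_of_forall_walk_meets (hG : G.Connected) {X : Set V} {a b x : V} {ca cb : ℕ}
    (hX : ∀ t ∈ X, G.dist a t + cb = G.dist b t + ca)
    (hmeets : ∀ p : G.Walk b x, ∃ t ∈ X, t ∈ p.support) :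
    G.dist a x + cb ≤ G.dist b x + ca := by
  obtain ⟨t, ht, hbtx⟩ := (hG b x).exists_dist_add_dist_eq hmeets
  have hatx : G.dist a x ≤ G.dist a t + G.dist t x := hG.dist_triangle
  have := hX t ht
  omega

end SimpleGraph

theorem stmt3_general {V : Type*} (G : SimpleGraph V) (hG : G.Connected)
    (X V₁ V₂ : Set V) (d : ℕ)
    (hpart : V₁ ∪ V₂ = Xᶜ) (hdisj : Disjoint V₁ V₂)
    (hnoedge : ∀ u ∈ V₁, ∀ w ∈ V₂, ¬ G.Adj u w)
    (hdiam : ∀ a ∈ X, ∀ b ∈ X, G.dist a b ≤ d)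
    (u v : V) (hu : u ∈ V₁) (hv : v ∈ V₁)
    (hproj : ∀ i ≤ d, projClass G X u i = projClass G X v i) :
    ∀ x ∈ V₂, ∀ y ∈ V₂, x ≠ y →
      (G.dist u x ≠ G.dist u y ↔ G.dist v x ≠ G.dist v y) := by
  have hadj : ∀ a ∈ V₁, ∀ w, G.Adj a w → w ∈ V₁ ∪ X := by
    intro a ha w haw
    by_cases hwX : w ∈ X
    · exact Or.inr hwX
    · have hw : w ∈ V₁ ∪ V₂ := hpart ▸ hwX
      exact Or.inl (hw.resolve_right fun hw₂ => hnoedge a ha w hw₂ haw)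
  have hmeets : ∀ w ∈ V₁, ∀ z ∈ V₂, ∀ p : G.Walk w z, ∃ t ∈ X, t ∈ p.support :=
    fun w hw z hz p => p.exists_mem_support_of_adj_subset hadj hw (hdisj.notMem_of_mem_right hz)
  have hX : ∀ t ∈ X, G.dist u t + setDist G X v = G.dist v t + setDist G X u :=
    fun _ ht => SimpleGraph.dist_add_setDist_eq_of_projClass_eq hG hdiam hproj ht
  have hshift : ∀ z ∈ V₂, G.dist u z + setDist G X v = G.dist v z + setDist G X u :=
    fun z hz => le_antisymm
      (SimpleGraph.dist_add_le_of_forall_walk_meets hG hX (hmeets v hv z hz))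
      (SimpleGraph.dist_add_le_of_forall_walk_meets hG (fun t ht => (hX t ht).symm)
        (hmeets u hu z hz))
  intro x hx y hy _
  have := hshift x hx
  have := hshift y hy
  omega

theorem stmt3 {V : Type*} (G : SimpleGraph V) (hG : G.Connected)
    (X V₁ V₂ : Set V) (d : ℕ)
    (hpart : V₁ ∪ V₂ = Xᶜ) (hdisj : Disjoint V₁ V₂)
    (h1 : V₁.Nonempty) (h2 : V₂.Nonempty)
    (hnoedge : ∀ u ∈ V₁, ∀ w ∈ V₂, ¬ G.Adj u w)
    (hdiam : ∀ a ∈ X, ∀ b ∈ X, G.dist a b ≤ d)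
    (u v : V) (hu : u ∈ V₁) (hv : v ∈ V₁)
    (hproj : ∀ i ≤ d, projClass G X u i = projClass G X v i) :
    ∀ x ∈ V₂, ∀ y ∈ V₂, x ≠ y →
      (G.dist u x ≠ G.dist u y ↔ G.dist v x ≠ G.dist v y) :=
  stmt3_general G hG X V₁ V₂ d hpart hdisj hnoedge hdiam u v hu hv hproj
end

section
/- Let G be a connected graph, X a separator of G with diam_G(X) ≤ d, and V₁, V₂ a partition of V(G) \ X with no edges between V₁ and V₂. Then for any v ∈ V₁ and x ∈ V₂, dist_G(v,x) = dist_G(v,X) + min over i ∈ {0,...,d} of (i + dist_G(X_i, x)), where (X₀,...,X_d) is the projection of v on X defined by X_i = {x' ∈ X : dist_G(v,x') = dist_G(v,X) + i}. -/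
namespace SimpleGraph

variable {V : Type*} {G : SimpleGraph V}

theorem Walk.dist_add_dist_le_length {u v w : V} (p : G.Walk u v) (hw : w ∈ p.support) :
    G.dist u w + G.dist w v ≤ p.length := by
  classical
  have hsplit := congrArg Walk.length (p.take_spec hw)
  rw [Walk.length_append] at hsplit
  exact hsplit ▸ add_le_add (dist_le _) (dist_le _)

theorem Walk.exists_mem_support_of_boundary_subset {S X : Set V}
    (hbdry : ∀ a ∈ S, ∀ b, G.Adj a b → b ∈ S ∨ b ∈ X) {u v : V} (p : G.Walk u v)
    (hu : u ∈ S) (hv : v ∉ S) : ∃ w ∈ p.support, w ∈ X := by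
  obtain ⟨e, he, hfst, hsnd⟩ := p.exists_boundary_dart S hu hv
  exact ⟨e.snd, p.dart_snd_mem_support_of_mem_darts he,
    (hbdry _ hfst _ e.adj).resolve_left hsnd⟩

theorem Connected.exists_mem_dist_add_dist_eq (hG : G.Connected) {S X : Set V}
    (hbdry : ∀ a ∈ S, ∀ b, G.Adj a b → b ∈ S ∨ b ∈ X) {u v : V} (hu : u ∈ S) (hv : v ∉ S) :
    ∃ w ∈ X, G.dist u w + G.dist w v = G.dist u v := by
  obtain ⟨p, hp⟩ := hG.exists_walk_length_eq_dist u v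
  obtain ⟨w, hwp, hwX⟩ := p.exists_mem_support_of_boundary_subset hbdry hu hv
  exact ⟨w, hwX, le_antisymm (hp ▸ p.dist_add_dist_le_length hwp) hG.dist_triangle⟩

end SimpleGraph

section setDist

variable {V : Type*} {G : SimpleGraph V} {S : Set V} {u v : V}

theorem setDist_le_dist (hu : u ∈ S) : setDist G S v ≤ G.dist v u :=
  Nat.sInf_le ⟨u, hu, G.dist_comm⟩

theorem exists_dist_eq_setDist (hS : S.Nonempty) : ∃ u ∈ S, G.dist v u = setDist G S v := by
  obtain ⟨u, hu⟩ := hS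
  obtain ⟨w, hw, hdist⟩ := Nat.sInf_mem (s := {m | ∃ u ∈ S, m = G.dist u v}) ⟨_, u, hu, rfl⟩
  exact ⟨w, hw, G.dist_comm.trans hdist.symm⟩

theorem dist_le_setDist_add (hG : G.Connected) {d : ℕ}
    (hdiam : ∀ a ∈ S, ∀ b ∈ S, G.dist a b ≤ d) (hu : u ∈ S) :
    G.dist v u ≤ setDist G S v + d := by
  obtain ⟨w, hw, hvw⟩ := exists_dist_eq_setDist (G := G) (v := v) ⟨u, hu⟩
  calc G.dist v u ≤ G.dist v w + G.dist w u := hG.dist_triangle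
    _ ≤ setDist G S v + d := hvw ▸ Nat.add_le_add_left (hdiam w hw u hu) _

end setDist

theorem stmt4_general {V : Type*} (G : SimpleGraph V) (hG : G.Connected)
    (X V₁ V₂ : Set V) (d : ℕ)
    (hpart : V₁ ∪ V₂ = Xᶜ) (hdisj : Disjoint V₁ V₂)
    (hnoedge : ∀ u ∈ V₁, ∀ w ∈ V₂, ¬ G.Adj u w)
    (hdiam : ∀ a ∈ X, ∀ b ∈ X, G.dist a b ≤ d) :
    ∀ v ∈ V₁, ∀ x ∈ V₂,
      G.dist v x = setDist G X v +
        sInf {m : ℕ | ∃ i ≤ d, ∃ u ∈ X,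
          G.dist v u = setDist G X v + i ∧ m = i + G.dist u x} := by
  intro v hv x hx
  have hbdry : ∀ a ∈ V₁, ∀ b, G.Adj a b → b ∈ V₁ ∨ b ∈ X := by
    intro a ha b hab
    by_contra! hb
    have : b ∈ V₁ ∪ V₂ := hpart ▸ hb.2
    exact hnoedge a ha b (this.resolve_left hb.1) hab
  obtain ⟨u, hu, hvux⟩ :=
    hG.exists_mem_dist_add_dist_eq hbdry hv (hdisj.notMem_of_mem_right hx)
  set s := setDist G X v
  set T := {m : ℕ | ∃ i ≤ d, ∃ u ∈ X, G.dist v u = s + i ∧ m = i + G.dist u x}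
  have hsu : s ≤ G.dist v u := setDist_le_dist hu
  have hus : G.dist v u ≤ s + d := dist_le_setDist_add hG hdiam hu
  have huT : G.dist v u - s + G.dist u x ∈ T := ⟨_, by omega, u, hu, by omega, rfl⟩
  obtain ⟨j, -, w, -, hvw, hmin⟩ := Nat.sInf_mem ⟨_, huT⟩
  apply le_antisymm
  · calc G.dist v x ≤ G.dist v w + G.dist w x := hG.dist_triangle
      _ = s + sInf T := by omega
  · have := Nat.sInf_le huT
    omega

theorem stmt4 {V : Type*} (G : SimpleGraph V) (hG : G.Connected)
    (X V₁ V₂ : Set V) (d : ℕ)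
    (hpart : V₁ ∪ V₂ = Xᶜ) (hdisj : Disjoint V₁ V₂)
    (h1 : V₁.Nonempty) (h2 : V₂.Nonempty)
    (hnoedge : ∀ u ∈ V₁, ∀ w ∈ V₂, ¬ G.Adj u w)
    (hdiam : ∀ a ∈ X, ∀ b ∈ X, G.dist a b ≤ d) :
    ∀ v ∈ V₁, ∀ x ∈ V₂,
      G.dist v x = setDist G X v +
        sInf {m : ℕ | ∃ i ≤ d, ∃ u ∈ X,
          G.dist v u = setDist G X v + i ∧ m = i + G.dist u x} :=
  stmt4_general G hG X V₁ V₂ d hpart hdisj hnoedge hdiam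
end

section
/- Let G be a connected graph and let v be a universal vertex of G. If W ⊆ V(G) \ {v} resolves V(G) \ {v} and no vertex of V(G) \ {v} is at distance 1 in G from every vertex of W, then W is a resolving set of G. -/
theorem stmt17 {V : Type*} (G : SimpleGraph V) (hG : G.Connected)
    (v : V) (huniv : ∀ x : V, x ≠ v → G.Adj v x)
    (W : Set V) (hWv : v ∉ W)
    (hres : ∀ x y : V, x ≠ v → y ≠ v → x ≠ y →
      ∃ w ∈ W, G.dist w x ≠ G.dist w y)
    (hno : ∀ x : V, x ≠ v → ¬ (∀ w ∈ W, G.dist x w = 1)) :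
    ∀ x y : V, x ≠ y → ∃ w ∈ W, G.dist w x ≠ G.dist w y := by
  have key : ∀ x : V, x ≠ v → ∃ w ∈ W, G.dist w x ≠ G.dist w v := by
    intro x hx
    obtain ⟨w, hw, hwd⟩ := by
      have := hno x hx
      push_neg at this
      exact this
    refine ⟨w, hw, ?_⟩
    have hwv : w ≠ v := fun h => hWv (h ▸ hw)
    have : G.dist w v = 1 := (SimpleGraph.dist_eq_one_iff_adj).2 ((huniv w hwv).symm)
    rw [this, G.dist_comm]
    exact hwd
  intro x y hxy
  by_cases hx : x = v
  · have hy : y ≠ v := fun h => hxy (hx.trans h.symm)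
    obtain ⟨w, hw, hwd⟩ := key y hy
    exact ⟨w, hw, fun h => hwd (hx ▸ h).symm⟩
  · by_cases hy : y = v
    · exact hy ▸ key x hx
    · exact hres x y hx hy hxy
end
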